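/- arXiv:1101.4448 — 2 statements merged into one kernel-verified Lean document; each statement's English description precedes it below -/
import Mathlib

section
/- Positive semidefiniteness of the distance kernel on the sphere: Let d ≥ 2, let x_0, …, x_{N-1} ∈ S^d and a_0, …, a_{N-1} ∈ ℂ. Then the sum ∑_{k,ℓ=0}^{N-1} a_k · conj(a_ℓ) · (1 − C_d ‖x_k − x_ℓ‖) is a nonnegative real number. -/
open MeasureTheory
open scoped RealInnerProductSpace

noncomputable section

/-- The unit sphere `S^d` in `ℝ^{d+1}`. -/
def sphereSet (d : ℕ) : Set (EuclideanSpace ℝ (Fin (d + 1))) :=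
  Metric.sphere 0 1

/-- The normalized surface (uniform) measure `σ_d` on `S^d`. -/
def uSph (d : ℕ) : Measure (EuclideanSpace ℝ (Fin (d + 1))) :=
  (μH[(d : ℝ)] (sphereSet d))⁻¹ • (μH[(d : ℝ)]).restrict (sphereSet d)

/-- The spherical cap `C(z;t) = {y ∈ S^d : ⟨z,y⟩ ≥ t}`. -/
def cap (d : ℕ) (z : EuclideanSpace ℝ (Fin (d + 1))) (t : ℝ) :
    Set (EuclideanSpace ℝ (Fin (d + 1))) :=
  {y | y ∈ sphereSet d ∧ t ≤ ⟪z, y⟫}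

/-- Indicator function `1_{C(z;t)}`. -/
def capInd (d : ℕ) (z : EuclideanSpace ℝ (Fin (d + 1))) (t : ℝ)
    (x : EuclideanSpace ℝ (Fin (d + 1))) : ℝ :=
  (cap d z t).indicator (fun _ => (1 : ℝ)) x

/-- The constant `C_d = (1/d) Γ((d+1)/2)/(√π Γ(d/2))`. -/
def Cd (d : ℕ) : ℝ :=
  (1 / (d : ℝ)) * Real.Gamma (((d : ℝ) + 1) / 2) /
    (Real.sqrt Real.pi * Real.Gamma ((d : ℝ) / 2))

end

/-!
On unit vectors, `1 - C ‖x - y‖ = (1 - 2C) + C (‖x‖ + ‖y‖ - ‖x - y‖)`, and `C_d ≤ 1/2` by the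
log-convexity of `Γ`. The kernel `‖x‖ + ‖y‖ - ‖x - y‖` is positive semidefinite on every Euclidean
space: by rotation invariance `‖u‖` is a constant multiple of `∫_B |⟪z, u⟫| dz` over the unit ball,
so the kernel is an average of the one-dimensional kernels
`|s| + |t| - |s - t| = 2 (min s⁺ t⁺ + min s⁻ t⁻)`, and `min s t = ∫₀^∞ 1[τ ≤ s] 1[τ ≤ t] dτ` is an
average of rank-one kernels. Complex coefficients reduce to real ones because the kernel is real
and symmetric.
-/

open Set Real

def IsPSDKernel {α : Type*} (K : α → α → ℝ) : Prop :=
  ∀ (N : ℕ) (x : Fin N → α) (c : Fin N → ℝ), 0 ≤ ∑ k, ∑ l, c k * c l * K (x k) (x l)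

namespace IsPSDKernel

variable {α β : Type*} {K L : α → α → ℝ}

lemma add (hK : IsPSDKernel K) (hL : IsPSDKernel L) :
    IsPSDKernel fun x y => K x y + L x y := fun N x c => by
  simpa only [mul_add, Finset.sum_add_distrib] using add_nonneg (hK N x c) (hL N x c)

lemma const_mul (hK : IsPSDKernel K) {r : ℝ} (hr : 0 ≤ r) :
    IsPSDKernel fun x y => r * K x y := fun N x c => by
  simpa only [Finset.mul_sum, mul_left_comm r] using mul_nonneg hr (hK N x c)

lemma comp (hK : IsPSDKernel K) (f : β → α) : IsPSDKernel fun x y => K (f x) (f y) :=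
  fun N x c => hK N (f ∘ x) c

lemma integral {Z : Type*} [MeasurableSpace Z] {μ : Measure Z} {K : Z → α → α → ℝ}
    (hK : ∀ z, IsPSDKernel (K z)) (hint : ∀ x y, Integrable (fun z => K z x y) μ) :
    IsPSDKernel fun x y => ∫ z, K z x y ∂μ := fun N x c => by
  have hint' : ∀ k l, Integrable (fun z => c k * c l * K z (x k) (x l)) μ :=
    fun k l => (hint (x k) (x l)).const_mul _
  calc 0 ≤ ∫ z, ∑ k, ∑ l, c k * c l * K z (x k) (x l) ∂μ :=
        integral_nonneg fun z => hK z N x c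
    _ = ∑ k, ∑ l, c k * c l * ∫ z, K z (x k) (x l) ∂μ := by
        rw [integral_finsetSum _ fun k _ => integrable_finsetSum _ fun l _ => hint' k l]
        refine Finset.sum_congr rfl fun k _ => ?_
        rw [integral_finsetSum _ fun l _ => hint' k l]
        simp only [integral_const_mul]

open scoped ComplexOrder in
lemma zero_le_sum_mul_conj (hK : IsPSDKernel K)
    (hsymm : ∀ x y, K x y = K y x) {N : ℕ} (x : Fin N → α) (a : Fin N → ℂ) :
    0 ≤ ∑ k, ∑ l, a k * starRingEnd ℂ (a l) * (K (x k) (x l) : ℂ) := by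
  rw [Complex.nonneg_iff]
  simp only [Complex.re_sum, Complex.im_sum, Complex.mul_re, Complex.mul_im, Complex.conj_re,
    Complex.conj_im, Complex.ofReal_re, Complex.ofReal_im]
  constructor
  · refine (add_nonneg (hK N x fun k => (a k).re) (hK N x fun k => (a k).im)).trans_eq ?_
    rw [← Finset.sum_add_distrib]
    refine Finset.sum_congr rfl fun k _ => ?_
    rw [← Finset.sum_add_distrib]
    refine Finset.sum_congr rfl fun l _ => ?_
    ring
  · set f : Fin N → Fin N → ℝ := fun k l =>
      ((a k).im * (a l).re - (a k).re * (a l).im) * K (x k) (x l) with hf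
    have hanti : ∀ k l, f l k = -f k l := fun k l => by simp only [hf, hsymm (x l)]; ring
    have hswap : ∑ k, ∑ l, f k l = -∑ k, ∑ l, f k l := by
      conv_lhs => rw [Finset.sum_comm]
      rw [← Finset.sum_neg_distrib]
      refine Finset.sum_congr rfl fun l _ => ?_
      rw [← Finset.sum_neg_distrib]
      exact Finset.sum_congr rfl fun k _ => hanti _ _
    calc 0 = ∑ k, ∑ l, f k l := by linarith
      _ = _ := Finset.sum_congr rfl fun k _ => Finset.sum_congr rfl fun l _ => by rw [hf]; ring

end IsPSDKernel

lemma isPSDKernel_mul_self {α : Type*} (f : α → ℝ) : IsPSDKernel fun x y => f x * f y :=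
  fun N x c => by
    have : ∑ k, ∑ l, c k * c l * (f (x k) * f (x l)) = (∑ k, c k * f (x k)) ^ 2 := by
      rw [sq, Finset.sum_mul_sum]
      exact Finset.sum_congr rfl fun k _ => Finset.sum_congr rfl fun l _ => by ring
    rw [this]; positivity

lemma isPSDKernel_const {α : Type*} {r : ℝ} (hr : 0 ≤ r) : IsPSDKernel fun _ _ : α => r := by
  simpa using (isPSDKernel_mul_self fun _ : α => (1 : ℝ)).const_mul hr

lemma indicator_Iic_mul_indicator_Iic (s t τ : ℝ) :
    (Iic s).indicator 1 τ * (Iic t).indicator 1 τ = (Iic (min s t)).indicator (1 : ℝ → ℝ) τ := by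
  rw [← Iic_inter_Iic, inter_indicator_one, Pi.mul_apply]

lemma min_max_zero_eq_integral (s t : ℝ) :
    min (max s 0) (max t 0) =
      ∫ τ in Ioi 0, (Iic s).indicator 1 τ * (Iic t).indicator 1 τ := by
  simp_rw [indicator_Iic_mul_indicator_Iic]
  rw [integral_indicator_one measurableSet_Iic, measureReal_restrict_apply measurableSet_Iic,
    Iic_inter_Ioi, volume_real_Ioc, sub_zero]
  exact (max_min_distrib_right ..).symm

lemma isPSDKernel_min_max_zero : IsPSDKernel fun s t : ℝ => min (max s 0) (max t 0) := by
  simp_rw [min_max_zero_eq_integral]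
  refine IsPSDKernel.integral (fun τ => isPSDKernel_mul_self _) fun s t => ?_
  simp_rw [indicator_Iic_mul_indicator_Iic]
  exact (integrable_indicator_iff measurableSet_Iic).2
    (integrableOn_const (by simp [Iic_inter_Ioi]))

lemma abs_add_abs_sub_abs_sub_eq (s t : ℝ) :
    |s| + |t| - |s - t| = 2 * (min (max s 0) (max t 0) + min (max (-s) 0) (max (-t) 0)) := by
  rcases le_total 0 s with hs | hs <;> rcases le_total 0 t with ht | ht <;>
    rcases le_total s t with hst | hst <;>
    simp [abs_of_nonneg, abs_of_nonpos, *] <;> linarith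

lemma isPSDKernel_abs_add_abs_sub_abs_sub : IsPSDKernel fun s t : ℝ => |s| + |t| - |s - t| := by
  simp_rw [abs_add_abs_sub_abs_sub_eq]
  exact (isPSDKernel_min_max_zero.add (isPSDKernel_min_max_zero.comp Neg.neg)).const_mul
    zero_le_two

section InnerProductSpace

open Metric

variable {E : Type*} [NormedAddCommGroup E] [InnerProductSpace ℝ E] [FiniteDimensional ℝ E]

lemma integral_abs_inner_closedBall [MeasurableSpace E] [BorelSpace E] {e : E} (he : ‖e‖ = 1)
    (u : E) :
    ∫ z in closedBall 0 1, |⟪z, u⟫| = (∫ z in closedBall 0 1, |⟪z, e⟫|) * ‖u‖ := by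
  rcases eq_or_ne u 0 with rfl | hu
  · simp
  set v : E := ‖u‖⁻¹ • u
  have hv : ‖v‖ = 1 := norm_smul_inv_norm hu
  have huv : u = ‖u‖ • v := by simp [v, smul_smul, hu]
  -- the reflection exchanging `e` and `v` preserves the ball and the Lebesgue measure
  let T : E ≃ₗᵢ[ℝ] E := Submodule.reflection (ℝ ∙ (e - v))ᗮ
  have hTe : T e = v := Submodule.reflection_sub (he.trans hv.symm)
  have hball : T ⁻¹' closedBall 0 1 = closedBall 0 1 := by
    ext z; simp
  calc ∫ z in closedBall 0 1, |⟪z, u⟫| = (∫ z in closedBall 0 1, |⟪T z, v⟫|) * ‖u‖ := by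
        rw [← T.measurePreserving.setIntegral_preimage_emb
          T.toHomeomorph.measurableEmbedding, hball, ← integral_mul_const]
        refine setIntegral_congr_fun measurableSet_closedBall fun z _ => ?_
        rw [huv, inner_smul_right, abs_mul, abs_norm, ← huv, mul_comm]
    _ = (∫ z in closedBall 0 1, |⟪z, e⟫|) * ‖u‖ := by
        simp only [← hTe, T.inner_map_map]

lemma integral_abs_inner_closedBall_pos [MeasurableSpace E] [BorelSpace E] {e : E}
    (he : ‖e‖ = 1) :
    0 < ∫ z in closedBall 0 1, |⟪z, e⟫| := by
  have hcont : Continuous fun z : E => |⟪z, e⟫| := by fun_prop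
  rw [setIntegral_pos_iff_support_of_nonneg_ae (.of_forall fun z => abs_nonneg _)
    (hcont.continuousOn.integrableOn_compact (isCompact_closedBall 0 1))]
  have hopen : IsOpen (Function.support (fun z : E => |⟪z, e⟫|) ∩ ball 0 1) :=
    hcont.isOpen_support.inter isOpen_ball
  refine (hopen.measure_pos volume ⟨(1 / 2 : ℝ) • e, ?_, ?_⟩).trans_le
    (measure_mono (inter_subset_inter_right _ ball_subset_closedBall))
  · simp [inner_smul_left, he]
  · norm_num [norm_smul, he]

lemma isPSDKernel_norm_add_norm_sub_norm_sub :
    IsPSDKernel fun x y : E => ‖x‖ + ‖y‖ - ‖x - y‖ := by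
  rcases subsingleton_or_nontrivial E with hE | hE
  · simpa [Subsingleton.elim _ (0 : E)] using isPSDKernel_const (α := E) le_rfl
  let _ : MeasurableSpace E := borel E
  have _ : BorelSpace E := ⟨rfl⟩
  obtain ⟨e, he⟩ := exists_norm_eq E zero_le_one
  have hC := integral_abs_inner_closedBall_pos he
  have hcont : ∀ x y : E, Continuous fun z : E => |⟪z, x⟫| + |⟪z, y⟫| - |⟪z, x - y⟫| := by
    intro x y; fun_prop
  have hK : IsPSDKernel fun x y : E =>
      ∫ z in closedBall 0 1, (|⟪z, x⟫| + |⟪z, y⟫| - |⟪z, x - y⟫|) := by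
    refine IsPSDKernel.integral (fun z => ?_) fun x y =>
      (hcont x y).continuousOn.integrableOn_compact (isCompact_closedBall 0 1)
    simpa only [inner_sub_right] using isPSDKernel_abs_add_abs_sub_abs_sub.comp (⟪z, ·⟫)
  convert hK.const_mul (inv_nonneg.2 hC.le) using 3 with x y
  have hint : ∀ u : E, IntegrableOn (fun z : E => |⟪z, u⟫|) (closedBall 0 1) := fun u =>
    (by fun_prop : Continuous fun z : E => |⟪z, u⟫|).continuousOn.integrableOn_compact
      (isCompact_closedBall 0 1)
  rw [integral_sub ?_ (hint _), integral_add (hint x) (hint y),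
    integral_abs_inner_closedBall he x, integral_abs_inner_closedBall he y,
    integral_abs_inner_closedBall he (x - y)]
  · field_simp
  · exact (hint x).add (hint y)

lemma isPSDKernel_one_sub_mul_norm_sub_sphere {C : ℝ} (hC₀ : 0 ≤ C) (hC : C ≤ 1 / 2) :
    IsPSDKernel fun x y : sphere (0 : E) 1 => 1 - C * ‖(x : E) - y‖ := by
  have h := ((isPSDKernel_const (α := E) (by linarith : 0 ≤ 1 - 2 * C)).add
    (isPSDKernel_norm_add_norm_sub_norm_sub.const_mul hC₀)).comp ((↑) : sphere (0 : E) 1 → E)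
  convert h using 3 with x y
  simp only [norm_eq_of_mem_sphere]
  ring

end InnerProductSpace

lemma Gamma_add_half_le_sqrt_mul_Gamma {t : ℝ} (ht : 0 < t) :
    Gamma (t + 1 / 2) ≤ √t * Gamma t := by
  have hΓ := (Gamma_pos_of_pos ht).le
  have h := Gamma_mul_add_mul_le_rpow_Gamma_mul_rpow_Gamma ht (by linarith : 0 < t + 1)
    one_half_pos one_half_pos (add_halves 1)
  rw [Gamma_add_one ht.ne', mul_rpow ht.le hΓ, ← sqrt_eq_rpow,
    ← sqrt_eq_rpow] at h
  calc Gamma (t + 1 / 2) = Gamma (1 / 2 * t + 1 / 2 * (t + 1)) := by ring_nf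
    _ ≤ √(Gamma t) * (√t * √(Gamma t)) := h
    _ = √t * Gamma t := by rw [mul_left_comm, mul_self_sqrt hΓ]

lemma Cd_nonneg (d : ℕ) : 0 ≤ Cd d := by
  unfold Cd
  have := Gamma_nonneg_of_nonneg (by positivity : (0 : ℝ) ≤ (d + 1) / 2)
  have := Gamma_nonneg_of_nonneg (by positivity : (0 : ℝ) ≤ d / 2)
  positivity

lemma Cd_le_half {d : ℕ} (hd : 1 ≤ d) : Cd d ≤ 1 / 2 := by
  set t : ℝ := d / 2 with ht_def
  have ht : 1 / 2 ≤ t := by rw [ht_def]; gcongr; exact_mod_cast hd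
  have hΓ := Gamma_pos_of_pos (by linarith : 0 < t)
  have hπt : 1 ≤ √(π * t) := one_le_sqrt.2 (by nlinarith [pi_gt_three])
  have hCd : Cd d = Gamma (t + 1 / 2) / (2 * t * √π * Gamma t) := by
    unfold Cd; rw [ht_def]; field_simp
  rw [hCd, div_le_iff₀ (by positivity)]
  calc Gamma (t + 1 / 2) ≤ √t * Gamma t := Gamma_add_half_le_sqrt_mul_Gamma (by linarith)
    _ ≤ √t * Gamma t * √(π * t) := le_mul_of_one_le_right (by positivity) hπt
    _ = 1 / 2 * (2 * t * √π * Gamma t) := by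
        rw [sqrt_mul pi_pos.le]
        linear_combination (√π * Gamma t) * mul_self_sqrt (by linarith : 0 ≤ t)

/-- Positive semidefiniteness of the distance kernel `1 - C_d ‖x - y‖` on the sphere. -/
theorem distance_kernel_posdef (d N : ℕ) (hd : 2 ≤ d)
    (x : Fin N → EuclideanSpace ℝ (Fin (d + 1)))
    (hx : ∀ k, x k ∈ sphereSet d)
    (a : Fin N → ℂ) :
    (∑ k, ∑ l, a k * (starRingEnd ℂ) (a l) *
        ((1 : ℂ) - ((Cd d * ‖x k - x l‖ : ℝ) : ℂ))).im = 0
    ∧ 0 ≤ (∑ k, ∑ l, a k * (starRingEnd ℂ) (a l) *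
        ((1 : ℂ) - ((Cd d * ‖x k - x l‖ : ℝ) : ℂ))).re := by
  have hK := isPSDKernel_one_sub_mul_norm_sub_sphere
    (E := EuclideanSpace ℝ (Fin (d + 1))) (Cd_nonneg d) (Cd_le_half (by omega))
  have h := Complex.nonneg_iff.1 <| hK.zero_le_sum_mul_conj (fun _ _ => by rw [norm_sub_rev])
    (fun k => ⟨x k, hx k⟩) a
  push_cast at h ⊢
  exact ⟨h.2.symm, h.1⟩
end

section
/- Closed form of the weighted kernel: Let d ≥ 2, let v : [−1,1] → ℝ be a nonnegative integrable function, and let V : [−1,1] → ℝ be an antiderivative of v. Then for all x, y ∈ S^d, K_{C,v}(x,y) = ∫_{S^d} V(min{⟨x,z⟩, ⟨y,z⟩}) dσ_d(z) − V(−1). -/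
open MeasureTheory
open scoped RealInnerProductSpace

/-- The weighted kernel `K_{C,v}(x,y) = ∫_{-1}^1 v(t) ∫_{S^d} 1_{C(z;t)}(x) 1_{C(z;t)}(y) dσ_d(z) dt`. -/
noncomputable def Kv (d : ℕ) (v : ℝ → ℝ) (x y : EuclideanSpace ℝ (Fin (d + 1))) : ℝ :=
  ∫ t in (-1 : ℝ)..1, v t * ∫ z, capInd d z t x * capInd d z t y ∂(uSph d)

/-! On the sphere, `1_{C(z;t)}(x) 1_{C(z;t)}(y)` is the indicator of `t ≤ min ⟪x,z⟫ ⟪y,z⟫`, so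
Fubini turns `K_{C,v}(x,y)` into `∫_{S^d} ∫_{-1}^{min ⟪x,z⟫ ⟪y,z⟫} v(t) dt dσ_d(z)`, whose inner
integral is `V(min ⟪x,z⟫ ⟪y,z⟫) - V(-1)`. The constant `V(-1)` comes out of the outer integral
because `σ_d` is a probability measure, i.e. `0 < μH[d](S^d) < ∞`: the graph of `w ↦ √(1 - ‖w‖²)`
over the unit ball of `ℝ^d` bounds it below, and the radial projection `x ↦ x / ‖x‖` of the faces
of the cube `[-1,1]^{d+1}`, which is 2-Lipschitz there since the faces avoid the open unit ball,
bounds it above. -/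

open Set Metric

section LayerCake

variable {X : Type*} [MeasurableSpace X] {ν : Measure X} {m : X → ℝ} {v : ℝ → ℝ} {a b : ℝ}

theorem setIntegral_Ioc_indicator_Iic {s : ℝ} (hs : s ∈ Icc a b) :
    ∫ t in Ioc a b, (Iic s).indicator v t = ∫ t in a..s, v t := by
  rw [setIntegral_indicator measurableSet_Iic, Ioc_inter_Iic, min_eq_right hs.2,
    intervalIntegral.integral_of_le hs.1]

theorem integrable_indicator_setOf_fst_le [IsFiniteMeasure ν] (hm : Measurable m)
    (hv : IntervalIntegrable v volume a b) :
    Integrable ({p : ℝ × X | p.1 ≤ m p.2}.indicator fun p => v p.1)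
      ((volume.restrict (Ioc a b)).prod ν) :=
  (hv.1.comp_fst ν).indicator (measurableSet_le measurable_fst (hm.comp measurable_snd))

theorem integrable_intervalIntegral_of_ae_mem_Icc [IsFiniteMeasure ν] (hm : Measurable m)
    (hmab : ∀ᵐ z ∂ν, m z ∈ Icc a b) (hv : IntervalIntegrable v volume a b) :
    Integrable (fun z => ∫ t in a..m z, v t) ν :=
  (integrable_indicator_setOf_fst_le hm hv).integral_prod_right.congr <|
    hmab.mono fun z hz => by simpa [indicator_apply] using setIntegral_Ioc_indicator_Iic hz

theorem intervalIntegral_mul_measureReal_setOf_le [IsFiniteMeasure ν] (hm : Measurable m)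
    (hab : a ≤ b) (hmab : ∀ᵐ z ∂ν, m z ∈ Icc a b) (hv : IntervalIntegrable v volume a b) :
    ∫ t in a..b, v t * ν.real {z | t ≤ m z} = ∫ z, (∫ t in a..m z, v t) ∂ν := by
  set F : ℝ × X → ℝ := {p | p.1 ≤ m p.2}.indicator fun p => v p.1
  calc ∫ t in a..b, v t * ν.real {z | t ≤ m z}
      = ∫ t in Ioc a b, (∫ z, F (t, z) ∂ν) := by
        rw [intervalIntegral.integral_of_le hab]
        congr 1 with t
        rw [mul_comm, ← smul_eq_mul,
          ← integral_indicator_const _ (measurableSet_le measurable_const hm)]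
        rfl
    _ = ∫ z, (∫ t in Ioc a b, F (t, z)) ∂ν :=
        integral_integral_swap (integrable_indicator_setOf_fst_le hm hv)
    _ = ∫ z, (∫ t in a..m z, v t) ∂ν :=
        integral_congr_ae <| hmab.mono fun z hz => by
          simpa [F, indicator_apply] using setIntegral_Ioc_indicator_Iic hz

end LayerCake

theorem lipschitzOnWith_inv_norm_smul {E : Type*} [NormedAddCommGroup E] [NormedSpace ℝ E] :
    LipschitzOnWith 2 (fun x : E => ‖x‖⁻¹ • x) {x | 1 ≤ ‖x‖} := by
  refine LipschitzOnWith.of_dist_le_mul fun x (hx : 1 ≤ ‖x‖) y (hy : 1 ≤ ‖y‖) => ?_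
  have hx0 : 0 < ‖x‖ := one_pos.trans_le hx
  have hy0 : 0 < ‖y‖ := one_pos.trans_le hy
  have hsplit : ‖x‖⁻¹ • x - ‖y‖⁻¹ • y = ‖x‖⁻¹ • (x - y) + (‖x‖⁻¹ - ‖y‖⁻¹) • y := by
    rw [smul_sub, sub_smul]; abel
  have hcoef : |‖x‖⁻¹ - ‖y‖⁻¹| * ‖y‖ = |‖y‖ - ‖x‖| / ‖x‖ := by
    rw [inv_sub_inv hx0.ne' hy0.ne', abs_div, abs_of_pos (mul_pos hx0 hy0)]
    field_simp
  rw [dist_eq_norm, dist_eq_norm, hsplit, NNReal.coe_ofNat]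
  calc ‖‖x‖⁻¹ • (x - y) + (‖x‖⁻¹ - ‖y‖⁻¹) • y‖
      ≤ ‖x - y‖ / ‖x‖ + |‖y‖ - ‖x‖| / ‖x‖ := by
        grw [norm_add_le, norm_smul, norm_smul, Real.norm_eq_abs, Real.norm_eq_abs, hcoef,
          abs_inv, abs_norm, inv_mul_eq_div]
    _ ≤ ‖x - y‖ / ‖x‖ + ‖x - y‖ / ‖x‖ := by
        gcongr; rw [abs_sub_comm]; exact abs_norm_sub_norm_le x y
    _ ≤ 2 * ‖x - y‖ := by
        rw [← two_mul]; gcongr; exact div_le_self (norm_nonneg _) hx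

namespace EuclideanSpace
variable {n : ℕ}

def snoc (w : EuclideanSpace ℝ (Fin n)) (c : ℝ) : EuclideanSpace ℝ (Fin (n + 1)) :=
  WithLp.toLp 2 (Fin.snoc w c)

theorem dist_snoc_sq (w w' : EuclideanSpace ℝ (Fin n)) (c c' : ℝ) :
    dist (snoc w c) (snoc w' c') ^ 2 = dist w w' ^ 2 + dist c c' ^ 2 := by
  simp [EuclideanSpace.dist_sq_eq, Fin.sum_univ_castSucc, snoc]

theorem norm_snoc_sq (w : EuclideanSpace ℝ (Fin n)) (c : ℝ) :
    ‖snoc w c‖ ^ 2 = ‖w‖ ^ 2 + c ^ 2 := by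
  simp [EuclideanSpace.norm_sq_eq, Fin.sum_univ_castSucc, snoc]

def insertNth (j : Fin (n + 1)) (c : ℝ) (w : EuclideanSpace ℝ (Fin n)) :
    EuclideanSpace ℝ (Fin (n + 1)) :=
  WithLp.toLp 2 (Fin.insertNth j c w)

theorem isometry_insertNth (j : Fin (n + 1)) (c : ℝ) : Isometry (insertNth j c) :=
  Isometry.of_dist_eq fun w w' => by
    simp [EuclideanSpace.dist_eq, Fin.sum_univ_succAbove _ j, insertNth]

def cube (n : ℕ) : Set (EuclideanSpace ℝ (Fin n)) := {x | ∀ k, |x k| ≤ 1}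

theorem isCompact_cube : IsCompact (cube n) := by
  have : cube n = (PiLp.homeomorph 2 _) ⁻¹' univ.pi fun _ => Icc (-1) 1 := by
    ext x; simp [cube, abs_le, Pi.le_def, forall_and]; rfl
  rw [this, Homeomorph.isCompact_preimage]
  exact isCompact_univ_pi fun _ => isCompact_Icc

theorem cube_inter_exists_abs_eq_one_subset :
    cube (n + 1) ∩ {x | ∃ j, |x j| = 1} ⊆
      ⋃ j, ⋃ ε ∈ ({-1, 1} : Set ℝ), insertNth j ε '' cube n := by
  rintro x ⟨hx, j, hj⟩
  simp only [mem_iUnion]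
  refine ⟨j, x j, ?_, WithLp.toLp 2 (j.removeNth x), fun k => hx _, ?_⟩
  · rcases abs_eq zero_le_one |>.1 hj with h | h <;> simp [h]
  · exact congrArg (WithLp.toLp 2) (Fin.insertNth_self_removeNth j x)

theorem sphere_subset_image_inv_norm_smul :
    sphere (0 : EuclideanSpace ℝ (Fin (n + 1))) 1 ⊆
      (fun x => ‖x‖⁻¹ • x) '' (cube (n + 1) ∩ {x | ∃ j, |x j| = 1}) := by
  intro z hz
  rw [mem_sphere_zero_iff_norm] at hz
  obtain ⟨j, hj⟩ := Finite.exists_max fun k => |z k|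
  have hc : 0 < |z j| := by
    by_contra! h
    have : z = 0 := by ext k; simpa using (hj k).trans h
    simp [this] at hz
  refine ⟨|z j|⁻¹ • z, ⟨fun k => ?_, j, ?_⟩, ?_⟩
  · simpa [abs_mul, inv_mul_le_iff₀ hc] using hj k
  · simp [abs_mul, hc.ne']
  · simp [norm_smul, hz, smul_smul, hc.ne']

theorem hausdorffMeasure_sphere_pos :
    0 < μH[n] (sphere (0 : EuclideanSpace ℝ (Fin (n + 1))) 1) := by
  set g : EuclideanSpace ℝ (Fin n) → EuclideanSpace ℝ (Fin (n + 1)) :=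
    fun w => snoc w √(1 - ‖w‖ ^ 2)
  have hg : AntilipschitzWith 1 g := AntilipschitzWith.of_le_mul_dist fun w w' => by
    rw [NNReal.coe_one, one_mul]
    refine le_of_sq_le_sq ?_ dist_nonneg
    rw [dist_snoc_sq]
    exact le_add_of_nonneg_right (sq_nonneg _)
  have hmaps : g '' closedBall 0 1 ⊆ sphere 0 1 := by
    rintro _ ⟨w, hw, rfl⟩
    have hw : ‖w‖ ^ 2 ≤ 1 := pow_le_one₀ (norm_nonneg w) (mem_closedBall_zero_iff.1 hw)
    rw [mem_sphere_zero_iff_norm, ← pow_eq_one_iff_of_nonneg (norm_nonneg _) two_ne_zero,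
      norm_snoc_sq, Real.sq_sqrt (sub_nonneg.2 hw)]
    ring
  calc 0 < μH[n] (closedBall (0 : EuclideanSpace ℝ (Fin n)) 1) :=
        measure_closedBall_pos _ _ one_pos
    _ ≤ μH[n] (g '' closedBall 0 1) := by
        simpa using hg.le_hausdorffMeasure_image (Nat.cast_nonneg n) (closedBall 0 1)
    _ ≤ _ := measure_mono hmaps

theorem hausdorffMeasure_sphere_lt_top :
    μH[n] (sphere (0 : EuclideanSpace ℝ (Fin (n + 1))) 1) < ⊤ := by
  set K := cube (n + 1) ∩ {x | ∃ j, |x j| = 1}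
  have hK : μH[n] K < ⊤ := by
    refine (measure_mono cube_inter_exists_abs_eq_one_subset).trans_lt <|
      (measure_iUnion_fintype_le _ _).trans_lt <| ENNReal.sum_lt_top.2 fun j _ =>
        measure_biUnion_lt_top (toFinite _) fun ε _ => ?_
    rw [(isometry_insertNth j ε).hausdorffMeasure_image (Or.inl (Nat.cast_nonneg n))]
    exact isCompact_cube.measure_lt_top
  have hK1 : K ⊆ {x | 1 ≤ ‖x‖} := by
    rintro x ⟨-, j, hj⟩
    simpa [hj] using PiLp.norm_apply_le x j
  calc μH[n] (sphere (0 : EuclideanSpace ℝ (Fin (n + 1))) 1)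
      ≤ μH[n] ((fun x => ‖x‖⁻¹ • x) '' K) := measure_mono sphere_subset_image_inv_norm_smul
    _ ≤ (2 : NNReal) ^ (n : ℝ) * μH[n] K :=
        (lipschitzOnWith_inv_norm_smul.mono hK1).hausdorffMeasure_image_le (Nat.cast_nonneg n)
    _ < ⊤ := ENNReal.mul_lt_top (by simp) hK

end EuclideanSpace

instance (d : ℕ) : IsProbabilityMeasure (uSph d) := by
  constructor
  rw [uSph, Measure.smul_apply, Measure.restrict_apply_univ, smul_eq_mul]
  exact ENNReal.inv_mul_cancel (EuclideanSpace.hausdorffMeasure_sphere_pos (n := d)).ne'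
    (EuclideanSpace.hausdorffMeasure_sphere_lt_top (n := d)).ne

theorem ae_mem_sphereSet_uSph (d : ℕ) : ∀ᵐ z ∂uSph d, z ∈ sphereSet d :=
  Measure.ae_smul_measure (ae_restrict_mem isClosed_sphere.measurableSet) _

section SphereInner
variable {d : ℕ} {x y z : EuclideanSpace ℝ (Fin (d + 1))}

theorem inner_mem_Icc_of_mem_sphereSet (hx : x ∈ sphereSet d) (hz : z ∈ sphereSet d) :
    ⟪x, z⟫ ∈ Icc (-1) 1 := by
  rw [sphereSet, mem_sphere_zero_iff_norm] at hx hz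
  simpa [hx, hz, abs_le] using abs_real_inner_le_norm x z

theorem min_inner_mem_Icc_of_mem_sphereSet (hx : x ∈ sphereSet d) (hy : y ∈ sphereSet d)
    (hz : z ∈ sphereSet d) : min ⟪x, z⟫ ⟪y, z⟫ ∈ Icc (-1) 1 :=
  ⟨le_min (inner_mem_Icc_of_mem_sphereSet hx hz).1 (inner_mem_Icc_of_mem_sphereSet hy hz).1,
    min_le_of_left_le (inner_mem_Icc_of_mem_sphereSet hx hz).2⟩

theorem capInd_mul_capInd (hx : x ∈ sphereSet d) (hy : y ∈ sphereSet d) (t : ℝ) :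
    capInd d z t x * capInd d z t y = {z | t ≤ min ⟪x, z⟫ ⟪y, z⟫}.indicator 1 z := by
  by_cases hxz : t ≤ ⟪x, z⟫ <;> by_cases hyz : t ≤ ⟪y, z⟫ <;>
    simp [capInd, cap, hx, hy, real_inner_comm, hxz, hyz]

theorem integral_capInd_mul_capInd (μ : Measure (EuclideanSpace ℝ (Fin (d + 1))))
    (hx : x ∈ sphereSet d) (hy : y ∈ sphereSet d) (t : ℝ) :
    ∫ z, capInd d z t x * capInd d z t y ∂μ = μ.real {z | t ≤ min ⟪x, z⟫ ⟪y, z⟫} := by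
  simp_rw [capInd_mul_capInd hx hy]
  exact integral_indicator_one (measurableSet_le measurable_const (by fun_prop))

end SphereInner

theorem weighted_kernel_closed_form_general (d : ℕ)
    (v V : ℝ → ℝ)
    (hvInt : IntervalIntegrable v MeasureTheory.volume (-1) 1)
    (hV : ∀ s ∈ Set.Icc (-1 : ℝ) 1, V s = V (-1) + ∫ u in (-1 : ℝ)..s, v u)
    (x y : EuclideanSpace ℝ (Fin (d + 1)))
    (hx : x ∈ sphereSet d) (hy : y ∈ sphereSet d) :
    Kv d v x y
      = (∫ z, V (min ⟪x, z⟫ ⟪y, z⟫) ∂(uSph d)) - V (-1) := by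
  set m : EuclideanSpace ℝ (Fin (d + 1)) → ℝ := fun z => min ⟪x, z⟫ ⟪y, z⟫
  have hm : Measurable m := by fun_prop
  have hmIcc : ∀ᵐ z ∂uSph d, m z ∈ Icc (-1) 1 :=
    (ae_mem_sphereSet_uSph d).mono fun _ => min_inner_mem_Icc_of_mem_sphereSet hx hy
  have hKv : Kv d v x y = ∫ z, (∫ t in (-1)..m z, v t) ∂uSph d := by
    simp_rw [Kv, integral_capInd_mul_capInd _ hx hy]
    exact intervalIntegral_mul_measureReal_setOf_le hm (by norm_num) hmIcc hvInt
  rw [hKv, integral_congr_ae (hmIcc.mono fun z hz => hV (m z) hz), integral_add (integrable_const _)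
    (integrable_intervalIntegral_of_ae_mem_Icc hm hmIcc hvInt), integral_const, probReal_univ,
    one_smul]
  ring

/-- Closed form of the weighted kernel:
`K_{C,v}(x,y) = ∫_{S^d} V(min{⟨x,z⟩, ⟨y,z⟩}) dσ_d(z) - V(-1)`. -/
theorem weighted_kernel_closed_form (d : ℕ) (hd : 2 ≤ d)
    (v V : ℝ → ℝ)
    (hv0 : ∀ t ∈ Set.Icc (-1 : ℝ) 1, 0 ≤ v t)
    (hvInt : IntervalIntegrable v MeasureTheory.volume (-1) 1)
    (hV : ∀ s ∈ Set.Icc (-1 : ℝ) 1, V s = V (-1) + ∫ u in (-1 : ℝ)..s, v u)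
    (x y : EuclideanSpace ℝ (Fin (d + 1)))
    (hx : x ∈ sphereSet d) (hy : y ∈ sphereSet d) :
    Kv d v x y
      = (∫ z, V (min ⟪x, z⟫ ⟪y, z⟫) ∂(uSph d)) - V (-1) :=
  weighted_kernel_closed_form_general d v V hvInt hV x y hx hy
end
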